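/- Let X = {(z,w) ∈ ℂ × ℂ : z·w = 0} and define u : ℂ × ℂ → ℝ by u(z,w) = 1 if z = 0 and u(z,w) = 0 otherwise (so on X, u(z,0) = 0 for z ≠ 0 and u(0,w) = 1 for all w). For x ∈ X let û(x) = inf{ (1/(2π)) ∫₀^{2π} u(f(e^{it})) dt : f an analytic disc in X with f(0) = x }. Then: (a) û(z,0) = 0 for every z ∈ ℂ (in particular û(0,0) = 0); (b) û(0,w) = 1 for every w ∈ ℂ with w ≠ 0; and consequently (c) the function û : X → ℝ is not upper semicontinuous at the point (0,0) with respect to the subspace topology on X. -/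

import Mathlib

open MeasureTheory Metric Set

/-- An analytic disc in `S ⊆ ℂ × ℂ`: continuous on the closed unit disc, holomorphic on
the open unit disc, with values in `S`. -/
def IsAnalyticDisc2 (S : Set (ℂ × ℂ)) (f : ℂ → ℂ × ℂ) : Prop :=
  ContinuousOn f (closedBall 0 1) ∧ DifferentiableOn ℂ f (ball 0 1) ∧
    MapsTo f (closedBall 0 1) S

/-- The union of the two coordinate complex lines in `ℂ²`. -/
def Xlines : Set (ℂ × ℂ) := {p : ℂ × ℂ | p.1 * p.2 = 0}

/-- The function `u` of the paper's Example 2: `u = 1` on `{z = 0}` and `u = 0` elsewhere;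
on `X` this gives `u(z,0) = 0` for `z ≠ 0` and `u(0,w) = 1`. -/
noncomputable def uEx : ℂ × ℂ → ℝ := fun p => if p.1 = 0 then 1 else 0

/-- The Poisson envelope of `uEx` over analytic discs in `Xlines`. -/
noncomputable def uhatEx : ℂ × ℂ → ℝ := fun x =>
  sInf {c : ℝ | ∃ f : ℂ → ℂ × ℂ, IsAnalyticDisc2 Xlines f ∧ f 0 = x ∧
    c = (1 / (2 * Real.pi)) *
      ∫ t in (0:ℝ)..(2 * Real.pi), uEx (f (Complex.exp (t * Complex.I)))}

/-!
On the line `{w = 0}` the envelope vanishes: the constant disc (at the origin, the disc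
`ζ ↦ (ζ, 0)`) keeps its boundary circle off `{z = 0}`, where `u = 0`. On the other line a disc through
`(0, w)`, `w ≠ 0`, cannot leave `{z = 0}`: its `w`-coordinate is nonzero near the centre, so
`z ∘ f` vanishes near `0`, hence everywhere by the identity theorem. Thus `û(0, w) = 1`, while
these points converge to the origin, where `û = 0`.
-/

open Filter Topology Real

lemma circleAverage_zero_one (φ : ℂ → ℝ) :
    circleAverage φ 0 1 =
      (1 / (2 * π)) * ∫ t in (0:ℝ)..(2 * π), φ (Complex.exp (t * Complex.I)) := by
  simp [circleAverage_def, circleMap]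

lemma uhatEx_eq_sInf (x : ℂ × ℂ) :
    uhatEx x = sInf ((fun f => circleAverage (uEx ∘ f) 0 1) ''
      {f | IsAnalyticDisc2 Xlines f ∧ f 0 = x}) := by
  simp only [uhatEx, circleAverage_zero_one, Function.comp_apply, image, mem_ofPred_eq, and_assoc,
    eq_comm (b := (1 / (2 * π)) * _)]

lemma uEx_nonneg (p : ℂ × ℂ) : 0 ≤ uEx p := by
  unfold uEx; split_ifs <;> norm_num

lemma isAnalyticDisc2_const {S : Set (ℂ × ℂ)} {x : ℂ × ℂ} (hx : x ∈ S) :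
    IsAnalyticDisc2 S fun _ => x :=
  ⟨continuousOn_const, differentiableOn_const x, fun _ _ => hx⟩

lemma eqOn_zero_of_mul_eq_zero {U : Set ℂ} {g h : ℂ → ℂ} {z₀ : ℂ} (hU : IsOpen U)
    (hUc : IsPreconnected U) (hz₀ : z₀ ∈ U) (hg : DifferentiableOn ℂ g U)
    (hh : ContinuousAt h z₀) (hne : h z₀ ≠ 0) (hgh : ∀ z ∈ U, g z * h z = 0) :
    EqOn g 0 U := by
  refine (hg.analyticOnNhd hU).eqOn_zero_of_preconnected_of_eventuallyEq_zero hUc hz₀ ?_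
  filter_upwards [hh.eventually_ne hne, hU.mem_nhds hz₀] with z hz hzU
  exact (mul_eq_zero.1 (hgh z hzU)).resolve_right hz

lemma IsAnalyticDisc2.fst_eqOn_zero {f : ℂ → ℂ × ℂ} (hf : IsAnalyticDisc2 Xlines f)
    (h0 : (f 0).2 ≠ 0) : EqOn (fun ζ => (f ζ).1) 0 (closedBall 0 1) := by
  obtain ⟨hcont, hdiff, hmaps⟩ := hf
  have hball : EqOn (fun ζ => (f ζ).1) 0 (ball 0 1) :=
    eqOn_zero_of_mul_eq_zero isOpen_ball (convex_ball 0 1).isPreconnected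
      (mem_ball_self one_pos) hdiff.fst
      (hdiff.differentiableAt (ball_mem_nhds 0 one_pos)).snd.continuousAt h0
      fun ζ hζ => hmaps (ball_subset_closedBall hζ)
  exact hball.of_subset_closure hcont.fst continuousOn_const ball_subset_closedBall
    (closure_ball (0 : ℂ) one_ne_zero).ge

lemma uhatEx_mk_zero (z : ℂ) : uhatEx (z, 0) = 0 := by
  rw [uhatEx_eq_sInf]
  refine IsLeast.csInf_eq ⟨?_, ?_⟩
  · obtain ⟨f, hf, hf0, hfu⟩ : ∃ f : ℂ → ℂ × ℂ, IsAnalyticDisc2 Xlines f ∧ f 0 = (z, 0) ∧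
        ∀ ζ ∈ sphere (0 : ℂ) 1, uEx (f ζ) = 0 := by
      by_cases hz : z = 0
      · refine ⟨fun ζ => (ζ, 0), ⟨(continuous_id.prodMk continuous_const).continuousOn,
          (differentiable_id.prodMk (differentiable_const _)).differentiableOn,
          fun ζ _ => by simp [Xlines]⟩, by simp [hz], fun ζ hζ => ?_⟩
        simp [uEx, ne_of_mem_sphere hζ one_ne_zero]
      · exact ⟨_, isAnalyticDisc2_const (by simp [Xlines]), rfl, fun _ _ => by simp [uEx, hz]⟩
    exact ⟨f, ⟨hf, hf0⟩, circleAverage_const_on_circle (by simpa using hfu)⟩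
  · rintro _ ⟨f, -, rfl⟩
    exact circleAverage_nonneg_of_nonneg fun _ _ => uEx_nonneg _

lemma uhatEx_zero_mk {w : ℂ} (hw : w ≠ 0) : uhatEx (0, w) = 1 := by
  suffices (fun f => circleAverage (uEx ∘ f) 0 1) ''
      {f | IsAnalyticDisc2 Xlines f ∧ f 0 = (0, w)} = {1} by
    rw [uhatEx_eq_sInf, this, csInf_singleton]
  refine eq_singleton_iff_unique_mem.2 ⟨?_, ?_⟩
  · refine ⟨_, ⟨isAnalyticDisc2_const (by simp [Xlines]), rfl⟩, ?_⟩
    simp [Function.comp_def, uEx, circleAverage_const]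
  · rintro _ ⟨f, ⟨hf, hf0⟩, rfl⟩
    refine circleAverage_const_on_circle fun ζ hζ => ?_
    have hζ' : ζ ∈ closedBall 0 1 := sphere_subset_closedBall (by simpa using hζ)
    simp [uEx, hf.fst_eqOn_zero (by simpa [hf0]) hζ']

/-- The paper's Example 2: on the union of two complex lines (not locally irreducible at
the origin) the Poisson envelope fails to be upper semicontinuous at the origin. -/
theorem example_envelope_not_usc :
    (∀ z : ℂ, uhatEx (z, 0) = 0) ∧
    (∀ w : ℂ, w ≠ 0 → uhatEx (0, w) = 1) ∧
    ¬ UpperSemicontinuousWithinAt uhatEx Xlines (0, 0) := by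
  refine ⟨uhatEx_mk_zero, fun _ => uhatEx_zero_mk, fun husc => ?_⟩
  have hlim : Tendsto (fun w : ℂ => ((0 : ℂ), w)) (𝓝[≠] 0) (𝓝[Xlines] (0, 0)) :=
    (continuous_const.prodMk continuous_id).continuousWithinAt.tendsto_nhdsWithin
      fun w _ => by simp [Xlines]
  have hsmall := hlim.eventually (husc 1 (by simp [uhatEx_mk_zero]))
  obtain ⟨w, hw, hw0⟩ := (hsmall.and self_mem_nhdsWithin).exists
  exact (uhatEx_zero_mk hw0).not_lt hw
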